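/- arXiv:2502.15408 — 3 statements merged into one kernel-verified Lean document; each statement's English description precedes it below -/
import Mathlib

section
/- For measurable spaces X_1, ..., X_k, the product-measure map m^k : P(X_1) × ... × P(X_k) → P(X_1 × ... × X_k) sending (μ_1, ..., μ_k) to the product measure μ_1 ⊗ ... ⊗ μ_k is measurable, where each space of probability measures P(X) carries the σ-algebra Σ_w generated by the evaluation maps μ ↦ μ(A) for measurable sets A. -/
open MeasureTheory ProbabilityTheory

/--  carries the σ-algebra Σ_w generated by the evaluation maps, i.e. the trace of
the σ-algebra on measures generated by evaluations. -/
instance probabilityMeasureMeasurableSpace {α : Type*} [MeasurableSpace α] :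
    MeasurableSpace (ProbabilityMeasure α) :=
  MeasurableSpace.comap (fun μ => (μ : Measure α)) inferInstance

namespace MeasureTheory.ProbabilityMeasure

lemma measurable_toMeasure {α : Type*} [MeasurableSpace α] :
    Measurable (fun μ : ProbabilityMeasure α => (μ : Measure α)) :=
  comap_measurable _

/-- A product measure is determined by its values on boxes, which form a generating π-system on
which `μ ↦ ∏ i, μ i (t i)` is measurable. -/
lemma measurable_measure_pi {ι : Type*} [Fintype ι] {X : ι → Type*}
    [∀ i, MeasurableSpace (X i)] :
    Measurable (fun μ : ∀ i, ProbabilityMeasure (X i) =>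
      Measure.pi fun i => (μ i : Measure (X i))) := by
  refine .measure_of_isPiSystem_of_isProbabilityMeasure generateFrom_pi.symm isPiSystem_pi ?_
  rintro _ ⟨t, ht, rfl⟩
  simp_rw [Measure.pi_pi]
  exact Finset.measurable_prod _ fun i _ =>
    (Measure.measurable_coe (ht i (Set.mem_univ i))).comp
      (measurable_toMeasure.comp (measurable_pi_apply i))

end MeasureTheory.ProbabilityMeasure

/-- For measurable spaces `𝒳 1, ..., 𝒳 k`, the product-measure map
`P(𝒳 1) × ... × P(𝒳 k) → P(𝒳 1 × ... × 𝒳 k)` is measurable, where each space of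
probability measures carries the σ-algebra generated by the evaluation maps. -/
theorem product_measure_map_measurable {k : ℕ} {𝒳 : Fin k → Type*}
    [∀ i, MeasurableSpace (𝒳 i)] :
    Measurable (fun μ : ∀ i, ProbabilityMeasure (𝒳 i) =>
      (⟨Measure.pi fun i => (μ i : Measure (𝒳 i)), inferInstance⟩ :
        ProbabilityMeasure (∀ i, 𝒳 i))) :=
  ProbabilityMeasure.measurable_measure_pi.subtype_mk
end

section
/- If q and q' are both Bayesian inversions of a Markov kernel p: X ⇝ Y relative to μ_X ∈ P(X), then q = q' (p_* μ_X)-almost everywhere: for every measurable B ⊆ X, q(B|·) = q'(B|·) outside a (p_* μ_X)-null set of Y. -/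
/-!
The graph measure `(Γ_q)_*(p_* μ)` is the composition-product `p_* μ ⊗ₘ q`, and for a Bayesian
inversion it equals `σ_*((Γ_p)_* μ)`, which does not involve `q`. Evaluated on rectangles `A × B`
it is `∫_A q(B|y) d(p_* μ)`; knowing these integrals for every `A` determines `q(B|·)` almost
everywhere, since `p_* μ` is finite.
-/

open MeasureTheory ProbabilityTheory

/-- The pushforward of a measure `ν` on `X` along the graph kernel
`Γ_T : x ↦ δ_x ⊗ T(·|x)` of a kernel `T : X ⇝ Y`. -/
noncomputable def graphJoint {X Y : Type*} [MeasurableSpace X] [MeasurableSpace Y]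
    (ν : Measure X) (T : Kernel X Y) : Measure (X × Y) :=
  ν.bind (fun x => (Measure.dirac x).prod (T x))

/-- `q : Y ⇝ X` is a Bayesian inversion of `p : X ⇝ Y` relative to `μ ∈ P(X)`:
`σ_*((Γ_q)_*(p_* μ)) = (Γ_p)_* μ`, where `σ` swaps the factors and
`p_* μ = μ.bind p`. -/
noncomputable def IsBayesianInversion {X Y : Type*} [MeasurableSpace X] [MeasurableSpace Y]
    (p : Kernel X Y) (μ : Measure X) (q : Kernel Y X) : Prop :=
  (graphJoint (μ.bind (p : X → Measure Y)) q).map Prod.swap = graphJoint μ p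

lemma graphJoint_eq_compProd {X Y : Type*} [MeasurableSpace X] [MeasurableSpace Y]
    (ν : Measure X) [SFinite ν] (T : Kernel X Y) [IsSFiniteKernel T] :
    graphJoint ν T = ν ⊗ₘ T := by
  rw [Measure.compProd_eq_comp_prod, graphJoint]
  congr with x : 1
  rw [Kernel.prod_apply, Kernel.id_apply]

lemma IsBayesianInversion.graphJoint_eq_map_swap {X Y : Type*}
    [MeasurableSpace X] [MeasurableSpace Y] {p : Kernel X Y} {μ : Measure X} {q : Kernel Y X}
    (hq : IsBayesianInversion p μ q) :
    graphJoint (μ.bind p) q = (graphJoint μ p).map Prod.swap := by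
  rw [← hq, Measure.map_map measurable_swap measurable_swap, Prod.swap_swap_eq, Measure.map_id]

lemma ProbabilityTheory.Kernel.ae_apply_eq_of_compProd_eq {α β : Type*}
    [MeasurableSpace α] [MeasurableSpace β]
    {μ : Measure α} [SigmaFinite μ] {κ η : Kernel α β} [IsSFiniteKernel κ] [IsSFiniteKernel η]
    (h : μ ⊗ₘ κ = μ ⊗ₘ η) {s : Set β} (hs : MeasurableSet s) :
    ∀ᵐ a ∂μ, κ a s = η a s :=
  ae_eq_of_forall_setLIntegral_eq_of_sigmaFinite (κ.measurable_coe hs) (η.measurable_coe hs)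
    fun t ht _ => by
      rw [← Measure.compProd_apply_prod ht hs, ← Measure.compProd_apply_prod ht hs, h]

/-- If `q` and `q'` are both Bayesian inversions of `p : X ⇝ Y` relative to
`μ_X ∈ P(X)`, then `q = q'` `(p_* μ_X)`-almost everywhere. -/
theorem bayesianInversion_ae_unique {X Y : Type*}
    [MeasurableSpace X] [MeasurableSpace Y]
    (p : Kernel X Y) [IsMarkovKernel p] (μ : Measure X) [IsProbabilityMeasure μ]
    (q q' : Kernel Y X) [IsMarkovKernel q] [IsMarkovKernel q']
    (hq : IsBayesianInversion p μ q) (hq' : IsBayesianInversion p μ q') :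
    ∀ B : Set X, MeasurableSet B →
      ∀ᵐ y ∂(μ.bind (p : X → Measure Y)), q y B = q' y B := by
  intro B hB
  have h_compProd : μ.bind p ⊗ₘ q = μ.bind p ⊗ₘ q' := by
    rw [← graphJoint_eq_compProd, ← graphJoint_eq_compProd, hq.graphJoint_eq_map_swap,
      hq'.graphJoint_eq_map_swap]
  exact Kernel.ae_apply_eq_of_compProd_eq h_compProd hB
end

section
/- Let (Θ, μ_Θ) be a probability space, p: Θ ⇝ X a Markov kernel, κ: Θ → Θ_1 a measurable map, and p_1: Θ_1 ⇝ X a Markov kernel such that p = p_1 ∘ κ (where κ is regarded as a deterministic kernel). If q: X ⇝ Θ is a Bayesian inversion of p relative to μ_Θ, then κ ∘ q : X ⇝ Θ_1 (i.e., x ↦ κ_*(q(·|x))) is a Bayesian inversion of p_1 relative to κ_* μ_Θ. -/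
open MeasureTheory ProbabilityTheory

/-! The joint law of `(x, κ θ)` under `κ ∘ q` is the image under `id × κ` of the joint law of
`(x, θ)` under `q`. Swapped, the latter is the joint law of `(θ, x)` under `p` by hypothesis, and
since `p = p₁ ∘ κ` its image under `κ × id` is the joint law of `(θ₁, x)` under `p₁` with prior
`κ_* μ_Θ`; for the same reason `p_* μ_Θ = (p₁)_* (κ_* μ_Θ)`. -/

section GraphJoint

variable {α β γ : Type*} [MeasurableSpace α] [MeasurableSpace β] [MeasurableSpace γ]

lemma graphJoint_eq_comp (ν : Measure α) (T : Kernel α β) [IsSFiniteKernel T] :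
    graphJoint ν T = (Kernel.id ×ₖ T) ∘ₘ ν := by
  refine congrArg ν.bind (funext fun x => ?_)
  rw [Kernel.prod_apply, Kernel.id_apply]

lemma graphJoint_kernelMap (ν : Measure α) (T : Kernel α β) [IsSFiniteKernel T]
    {f : β → γ} (hf : Measurable f) :
    graphJoint ν (T.map f) = (graphJoint ν T).map (Prod.map id f) := by
  rw [graphJoint_eq_comp, graphJoint_eq_comp, Measure.map_comp _ _ (measurable_id.prodMap hf),
    ← Kernel.map_prod_map _ _ measurable_id hf, Kernel.map_id]

lemma MeasureTheory.Measure.comp_map_eq_comap_comp (μ : Measure α) (T : Kernel β γ)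
    {f : α → β} (hf : Measurable f) :
    T ∘ₘ μ.map f = T.comap f hf ∘ₘ μ := by
  rw [← Measure.deterministic_comp_eq_map hf, Measure.comp_assoc,
    Kernel.comp_deterministic_eq_comap]

lemma graphJoint_measureMap (μ : Measure α) (T : Kernel β γ) [IsSFiniteKernel T]
    {f : α → β} (hf : Measurable f) :
    graphJoint (μ.map f) T = (graphJoint μ (T.comap f hf)).map (Prod.map f id) := by
  rw [graphJoint_eq_comp, graphJoint_eq_comp, Measure.comp_map_eq_comap_comp _ _ hf,
    Kernel.comap_prod, Kernel.id_comap, ← Kernel.id_map hf, Kernel.map_prod_eq _ _ hf,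
    Measure.map_comp _ _ (hf.prodMap measurable_id)]

end GraphJoint

theorem bayesianInversion_pushforward_general {Θ Θ₁ X : Type*}
    [MeasurableSpace Θ] [MeasurableSpace Θ₁] [MeasurableSpace X]
    (p : Kernel Θ X) (μΘ : Measure Θ)
    (κ : Θ → Θ₁) (hκ : Measurable κ)
    (p₁ : Kernel Θ₁ X) [IsMarkovKernel p₁]
    (hfact : p = p₁ ∘ₖ Kernel.deterministic κ hκ)
    (q : Kernel X Θ) [IsMarkovKernel q]
    (hq : IsBayesianInversion p μΘ q) :
    IsBayesianInversion p₁ (μΘ.map κ) ((Kernel.deterministic κ hκ) ∘ₖ q) := by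
  rw [Kernel.comp_deterministic_eq_comap] at hfact
  subst hfact
  unfold IsBayesianInversion at hq ⊢
  rw [Measure.comp_map_eq_comap_comp _ _ hκ, Kernel.deterministic_comp_eq_map,
    graphJoint_kernelMap _ _ hκ, Measure.map_map measurable_swap (measurable_id.prodMap hκ),
    ← Prod.map_comp_swap, ← Measure.map_map (hκ.prodMap measurable_id) measurable_swap, hq,
    graphJoint_measureMap _ _ hκ]

/-- Let `(Θ, μ_Θ)` be a probability space, `p : Θ ⇝ X` a Markov kernel, `κ : Θ → Θ₁`
measurable and `p₁ : Θ₁ ⇝ X` a Markov kernel with `p = p₁ ∘ κ` (with `κ` regarded as a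
deterministic kernel). If `q : X ⇝ Θ` is a Bayesian inversion of `p` relative to `μ_Θ`,
then `κ ∘ q : X ⇝ Θ₁` is a Bayesian inversion of `p₁` relative to `κ_* μ_Θ`. -/
theorem bayesianInversion_pushforward {Θ Θ₁ X : Type*}
    [MeasurableSpace Θ] [MeasurableSpace Θ₁] [MeasurableSpace X]
    (p : Kernel Θ X) [IsMarkovKernel p] (μΘ : Measure Θ) [IsProbabilityMeasure μΘ]
    (κ : Θ → Θ₁) (hκ : Measurable κ)
    (p₁ : Kernel Θ₁ X) [IsMarkovKernel p₁]
    (hfact : p = p₁ ∘ₖ Kernel.deterministic κ hκ)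
    (q : Kernel X Θ) [IsMarkovKernel q]
    (hq : IsBayesianInversion p μΘ q) :
    IsBayesianInversion p₁ (μΘ.map κ) ((Kernel.deterministic κ hκ) ∘ₖ q) :=
  bayesianInversion_pushforward_general p μΘ κ hκ p₁ hfact q hq
end
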